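/- arXiv:1909.09819 — 3 statements merged into one kernel-verified Lean document; each statement's English description precedes it below -/
import Mathlib

section
/- Let (x_i, y_i), i = 1,…,N be points in ℝ^d × ℝ, and let R_1,…,R_N be i.i.d. random vectors in ℝ^d with mean 𝟙 and covariance λΣ. Then (1/N)∑_{i=1}^N E[(wᵀ(R_i ⊙ x_i) − y_i)²] = (1/N)∑_{i=1}^N (wᵀx_i − y_i)² + λ wᵀ(C ⊙ Σ)w, where C = (1/N)∑_{i=1}^N x_i x_iᵀ. -/
/-!
Write `Rᵢ = 𝟙 + Zᵢ` with `Zᵢ` centred. Then `wᵀ(Rᵢ ⊙ xᵢ) − yᵢ = (wᵀxᵢ − yᵢ) + ∑ⱼ wⱼxᵢⱼZᵢⱼ`; squaring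
and integrating kills the cross term, and the noise term has expectation
`∑ⱼₖ (wⱼxᵢⱼ)(wₖxᵢₖ) λΣⱼₖ`, which averages over `i` to `λ wᵀ(C ⊙ Σ)w`.
-/

open MeasureTheory Finset

section

variable {Ω ι : Type*} [MeasurableSpace Ω] {μ : Measure Ω} [Fintype ι]

lemma sq_sum_mul (a z : ι → ℝ) :
    (∑ j, a j * z j) ^ 2 = ∑ j, ∑ k, a j * a k * (z j * z k) := by
  rw [sq, sum_mul_sum]
  exact sum_congr rfl fun j _ => sum_congr rfl fun k _ => by ring

lemma integrable_sq_sum_mul (a : ι → ℝ) {Z : ι → Ω → ℝ}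
    (hZ : ∀ j k, Integrable (fun ω => Z j ω * Z k ω) μ) :
    Integrable (fun ω => (∑ j, a j * Z j ω) ^ 2) μ := by
  simp_rw [sq_sum_mul]
  exact integrable_finsetSum _ fun j _ => integrable_finsetSum _ fun k _ =>
    (hZ j k).const_mul _

lemma integral_sq_sum_mul (a : ι → ℝ) {Z : ι → Ω → ℝ}
    (hZ : ∀ j k, Integrable (fun ω => Z j ω * Z k ω) μ) :
    ∫ ω, (∑ j, a j * Z j ω) ^ 2 ∂μ = ∑ j, ∑ k, a j * a k * ∫ ω, Z j ω * Z k ω ∂μ := by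
  simp_rw [sq_sum_mul]
  rw [integral_finsetSum _ fun j _ => integrable_finsetSum _ fun k _ => (hZ j k).const_mul _]
  refine sum_congr rfl fun j _ => ?_
  rw [integral_finsetSum _ fun k _ => (hZ j k).const_mul _]
  simp_rw [integral_const_mul]

lemma integral_sum_mul (a : ι → ℝ) {Z : ι → Ω → ℝ} (hZ : ∀ j, Integrable (Z j) μ) :
    ∫ ω, ∑ j, a j * Z j ω ∂μ = ∑ j, a j * ∫ ω, Z j ω ∂μ := by
  rw [integral_finsetSum _ fun j _ => (hZ j).const_mul _]
  simp_rw [integral_const_mul]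

lemma integral_add_const_sq [IsProbabilityMeasure μ] {f : Ω → ℝ} (hf : Integrable f μ)
    (hf2 : Integrable (fun ω => f ω ^ 2) μ) (c : ℝ) :
    ∫ ω, (f ω + c) ^ 2 ∂μ = ∫ ω, f ω ^ 2 ∂μ + 2 * c * ∫ ω, f ω ∂μ + c ^ 2 := by
  have hexpand : (fun ω => (f ω + c) ^ 2) = fun ω => f ω ^ 2 + 2 * c * f ω + c ^ 2 := by
    funext ω; ring
  have hquad : Integrable (fun ω => f ω ^ 2 + 2 * c * f ω) μ := hf2.add (hf.const_mul _)
  rw [hexpand, integral_add hquad (integrable_const _), integral_add hf2 (hf.const_mul _),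
    integral_const_mul]
  simp

lemma integrable_sub_const_mul_sub_const [IsFiniteMeasure μ] {X Y : Ω → ℝ}
    (hX : Integrable X μ) (hY : Integrable Y μ) (hXY : Integrable (fun ω => X ω * Y ω) μ)
    (a b : ℝ) : Integrable (fun ω => (X ω - a) * (Y ω - b)) μ := by
  have hexpand : (fun ω => (X ω - a) * (Y ω - b))
      = fun ω => X ω * Y ω - b * X ω - a * Y ω + a * b := by
    funext ω; ring
  rw [hexpand]
  exact ((hXY.sub (hX.const_mul b)).sub (hY.const_mul a)).add (integrable_const _)

lemma integral_sum_mul_sub_sq [IsProbabilityMeasure μ] {R : Ω → ι → ℝ} {m : ι → ℝ}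
    {V : Matrix ι ι ℝ} (hR : ∀ j, Integrable (fun ω => R ω j) μ)
    (hRR : ∀ j k, Integrable (fun ω => R ω j * R ω k) μ) (hmean : ∀ j, ∫ ω, R ω j ∂μ = m j)
    (hcov : ∀ j k, ∫ ω, (R ω j - m j) * (R ω k - m k) ∂μ = V j k) (a : ι → ℝ) (y : ℝ) :
    ∫ ω, (∑ j, a j * R ω j - y) ^ 2 ∂μ
      = (∑ j, a j * m j - y) ^ 2 + ∑ j, ∑ k, a j * a k * V j k := by
  set Z : ι → Ω → ℝ := fun j ω => R ω j - m j
  have hZZ : ∀ j k, Integrable (fun ω => Z j ω * Z k ω) μ := fun j k =>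
    integrable_sub_const_mul_sub_const (hR j) (hR k) (hRR j k) (m j) (m k)
  have hZ : ∀ j, Integrable (Z j) μ := fun j => (hR j).sub (integrable_const _)
  have hZ_mean : ∫ ω, ∑ j, a j * Z j ω ∂μ = 0 := by
    rw [integral_sum_mul a hZ]
    refine sum_eq_zero fun j _ => ?_
    rw [integral_sub (hR j) (integrable_const _), hmean, integral_const]
    simp
  have hsplit : ∀ ω, ∑ j, a j * R ω j - y = ∑ j, a j * Z j ω + (∑ j, a j * m j - y) := by
    intro ω
    simp only [Z, mul_sub, sum_sub_distrib]
    ring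
  simp_rw [hsplit]
  rw [integral_add_const_sq (integrable_finsetSum _ fun j _ => (hZ j).const_mul _)
    (integrable_sq_sum_mul a hZZ), hZ_mean, integral_sq_sum_mul a hZZ]
  simp only [Z, hcov]
  ring

lemma average_quadForm_eq_hadamard {N : ℕ} (x : Fin N → ι → ℝ) (w : ι → ℝ) (l : ℝ)
    (S C : Matrix ι ι ℝ)
    (hC : ∀ j k, C j k = (1 / (N : ℝ)) * ∑ i, x i j * x i k) :
    (1 / (N : ℝ)) * ∑ i, ∑ j, ∑ k, w j * x i j * (w k * x i k) * (l * S j k)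
      = l * ∑ j, ∑ k, w j * (C j k * S j k) * w k := by
  simp only [hC, mul_sum, sum_mul]
  rw [sum_comm]
  refine sum_congr rfl fun j _ => ?_
  rw [sum_comm]
  exact sum_congr rfl fun k _ => sum_congr rfl fun i _ => by ring

end

theorem stmt1_general {Ω : Type*} [MeasurableSpace Ω] (μ : Measure Ω) [IsProbabilityMeasure μ]
    (d N : ℕ)
    (x : Fin N → Fin d → ℝ) (y : Fin N → ℝ)
    (R : Fin N → Ω → Fin d → ℝ) (l : ℝ) (S : Matrix (Fin d) (Fin d) ℝ)
    (hmean : ∀ i j, ∫ ω, R i ω j ∂μ = 1)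
    (hcov : ∀ i j k, ∫ ω, (R i ω j - 1) * (R i ω k - 1) ∂μ = l * S j k)
    (hint : ∀ i j k, Integrable (fun ω => R i ω j * R i ω k) μ)
    (w : Fin d → ℝ)
    (C : Matrix (Fin d) (Fin d) ℝ)
    (hC : ∀ j k, C j k = (1 / (N : ℝ)) * ∑ i, x i j * x i k) :
    (1 / (N : ℝ)) * ∑ i, ∫ ω, (∑ j, w j * (R i ω j * x i j) - y i) ^ 2 ∂μ
      = (1 / (N : ℝ)) * ∑ i, (∑ j, w j * x i j - y i) ^ 2
        + l * ∑ j, ∑ k, w j * (C j k * S j k) * w k := by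
  have hR : ∀ i j, Integrable (fun ω => R i ω j) μ := fun i j =>
    Integrable.of_integral_ne_zero (by rw [hmean]; exact one_ne_zero)
  have hsample : ∀ i, ∫ ω, (∑ j, w j * (R i ω j * x i j) - y i) ^ 2 ∂μ
      = (∑ j, w j * x i j - y i) ^ 2
        + ∑ j, ∑ k, w j * x i j * (w k * x i k) * (l * S j k) := by
    intro i
    have hlinear : ∀ ω, ∑ j, w j * (R i ω j * x i j) = ∑ j, w j * x i j * R i ω j :=
      fun ω => sum_congr rfl fun j _ => by ring
    have h := integral_sum_mul_sub_sq (V := Matrix.of fun j k => l * S j k) (hR i) (hint i)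
      (hmean i) (hcov i) (fun j => w j * x i j) (y i)
    simp only [mul_one, Matrix.of_apply] at h
    simp_rw [hlinear]
    exact h
  simp only [hsample, sum_add_distrib, mul_add, average_quadForm_eq_hadamard x w l S C hC]

/-- Noise injection in least squares as Hadamard-structured regularization:
`(1/N)∑ᵢ E[(wᵀ(Rᵢ ⊙ xᵢ) − yᵢ)²] = (1/N)∑ᵢ (wᵀxᵢ − yᵢ)² + λ wᵀ(C ⊙ Σ)w`
where `C = (1/N)∑ᵢ xᵢxᵢᵀ`. -/
theorem stmt1 {Ω : Type*} [MeasurableSpace Ω] (μ : Measure Ω) [IsProbabilityMeasure μ]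
    (d N : ℕ) (hN : 0 < N)
    (x : Fin N → Fin d → ℝ) (y : Fin N → ℝ)
    (R : Fin N → Ω → Fin d → ℝ) (l : ℝ) (S : Matrix (Fin d) (Fin d) ℝ)
    (hl : 0 ≤ l) (hS : S.PosSemidef)
    (hmean : ∀ i j, ∫ ω, R i ω j ∂μ = 1)
    (hcov : ∀ i j k, ∫ ω, (R i ω j - 1) * (R i ω k - 1) ∂μ = l * S j k)
    (hint : ∀ i j k, Integrable (fun ω => R i ω j * R i ω k) μ)
    (w : Fin d → ℝ)
    (C : Matrix (Fin d) (Fin d) ℝ)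
    (hC : ∀ j k, C j k = (1 / (N : ℝ)) * ∑ i, x i j * x i k) :
    (1 / (N : ℝ)) * ∑ i, ∫ ω, (∑ j, w j * (R i ω j * x i j) - y i) ^ 2 ∂μ
      = (1 / (N : ℝ)) * ∑ i, (∑ j, w j * x i j - y i) ^ 2
        + l * ∑ j, ∑ k, w j * (C j k * S j k) * w k :=
  stmt1_general μ d N x y R l S hmean hcov hint w C hC
end

section
/- Let (x_i, y_i) ∈ ℝ^d × ℝ for i = 1,…,N with ∑_i x_i = 0, and let R_1,…,R_N be i.i.d. random vectors with mean 𝟙_d and covariance λ 𝟙_d 𝟙_dᵀ. Assume C = (1/N)∑ x_i x_iᵀ is invertible. Then (1/N)∑_{i=1}^N E[(wᵀ(R_i ⊙ x_i) − y_i)²] = (1/N)∑_{i=1}^N ((C^{1/2}w)ᵀ(C^{-1/2}x_i) − y_i)² + λ‖C^{1/2}w‖². -/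
open MeasureTheory Finset Matrix

/-- Fully-correlated multiplicative noise (covariance `λ 𝟙𝟙ᵀ`) on centred
data in least squares is equivalent to ridge regression on ZCA-whitened data:
`(1/N)∑ᵢ E[(wᵀ(Rᵢ⊙xᵢ) − yᵢ)²] = (1/N)∑ᵢ ((C^{1/2}w)ᵀ(C^{-1/2}xᵢ) − yᵢ)² + λ‖C^{1/2}w‖²`. -/
theorem stmt5 {Ω : Type*} [MeasurableSpace Ω] (μ : Measure Ω) [IsProbabilityMeasure μ]
    (d N : ℕ) (hN : 0 < N)
    (x : Fin N → Fin d → ℝ) (y : Fin N → ℝ)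
    (hcentred : ∀ j, ∑ i, x i j = 0)
    (R : Fin N → Ω → Fin d → ℝ) (l : ℝ) (hl : 0 ≤ l)
    (hmean : ∀ i j, ∫ ω, R i ω j ∂μ = 1)
    (hcov : ∀ i j k, ∫ ω, (R i ω j - 1) * (R i ω k - 1) ∂μ = l)
    (hint : ∀ i j k, Integrable (fun ω => R i ω j * R i ω k) μ)
    (w : Fin d → ℝ)
    (C B : Matrix (Fin d) (Fin d) ℝ)
    (hC : ∀ j k, C j k = (1 / (N : ℝ)) * ∑ i, x i j * x i k)
    (hCinv : IsUnit C.det)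
    (hB : B * B = C) (hBsymm : Bᵀ = B) (hBpsd : B.PosSemidef) :
    (1 / (N : ℝ)) * ∑ i, ∫ ω, (∑ j, w j * (R i ω j * x i j) - y i) ^ 2 ∂μ
      = (1 / (N : ℝ)) * ∑ i, (B.mulVec w ⬝ᵥ B⁻¹.mulVec (x i) - y i) ^ 2
        + l * (B.mulVec w ⬝ᵥ B.mulVec w) := by
  -- integrability of R
  have hR1 : ∀ i j, Integrable (fun ω => R i ω j) μ := by
    intro i j
    by_contra h
    have h0 := integral_undef h
    rw [hmean i j] at h0
    norm_num at h0
  -- second moments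
  have hRR : ∀ i j k, ∫ ω, R i ω j * R i ω k ∂μ = 1 + l := by
    intro i j k
    have e := hcov i j k
    have hrw : (fun ω => (R i ω j - 1) * (R i ω k - 1))
        = fun ω => R i ω j * R i ω k - R i ω j - R i ω k + 1 := by
      funext ω; ring
    have Ia : Integrable (fun ω => R i ω j * R i ω k - R i ω j) μ :=
      (hint i j k).sub (hR1 i j)
    have Ib : Integrable (fun ω => R i ω j * R i ω k - R i ω j - R i ω k) μ :=
      Ia.sub (hR1 i k)
    rw [hrw] at e
    rw [integral_add Ib (integrable_const 1), integral_sub Ia (hR1 i k),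
      integral_sub (hint i j k) (hR1 i j), hmean, hmean, integral_const] at e
    simp at e
    linarith
  -- the pointwise expectation computation
  have key : ∀ i, ∫ ω, (∑ j, w j * (R i ω j * x i j) - y i) ^ 2 ∂μ
      = (∑ j, w j * x i j - y i) ^ 2 + l * (∑ j, w j * x i j) ^ 2 := by
    intro i
    set a : Fin d → ℝ := fun j => w j * x i j with ha
    have hrw : (fun ω => (∑ j, w j * (R i ω j * x i j) - y i) ^ 2)
        = fun ω => (∑ j, ∑ k, a j * a k * (R i ω j * R i ω k))
            - (2 * y i) * (∑ j, a j * R i ω j) + y i ^ 2 := by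
      funext ω
      have h1 : ∑ j, w j * (R i ω j * x i j) = ∑ j, a j * R i ω j :=
        Finset.sum_congr rfl (fun j _ => by simp [ha]; ring)
      have h2 : (∑ j, a j * R i ω j) ^ 2
          = ∑ j, ∑ k, a j * a k * (R i ω j * R i ω k) := by
        rw [sq, Finset.sum_mul_sum]
        exact Finset.sum_congr rfl fun j _ => Finset.sum_congr rfl fun k _ => by ring
      rw [h1, show (∑ j, a j * R i ω j - y i) ^ 2
          = (∑ j, a j * R i ω j) ^ 2 - (2 * y i) * (∑ j, a j * R i ω j) + y i ^ 2
          from by ring, h2]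
    have I1 : ∀ j k, Integrable (fun ω => a j * a k * (R i ω j * R i ω k)) μ := by
      intro j k
      simpa [mul_assoc] using (hint i j k).const_mul (a j * a k)
    have I2 : Integrable (fun ω => (2 * y i) * (∑ j, a j * R i ω j)) μ := by
      apply Integrable.const_mul
      exact integrable_finset_sum _ fun j _ => (hR1 i j).const_mul (a j)
    have Idouble : Integrable
        (fun ω => ∑ j, ∑ k, a j * a k * (R i ω j * R i ω k)) μ :=
      integrable_finset_sum _ fun j _ => integrable_finset_sum _ fun k _ => I1 j k
    have I12 : Integrable (fun ω => (∑ j, ∑ k, a j * a k * (R i ω j * R i ω k))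
        - (2 * y i) * (∑ j, a j * R i ω j)) μ := Idouble.sub I2
    rw [hrw, integral_add I12 (integrable_const _),
      integral_sub Idouble I2, integral_const]
    have hD : ∫ ω, ∑ j, ∑ k, a j * a k * (R i ω j * R i ω k) ∂μ
        = (∑ j, a j) ^ 2 * (1 + l) := by
      rw [integral_finset_sum _ fun j _ =>
        integrable_finset_sum _ fun k _ => I1 j k]
      have h3 : ∀ j, ∫ ω, ∑ k, a j * a k * (R i ω j * R i ω k) ∂μ
          = ∑ k, a j * a k * (1 + l) := by
        intro j
        rw [integral_finset_sum _ fun k _ => I1 j k]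
        exact Finset.sum_congr rfl fun k _ => by
          rw [MeasureTheory.integral_const_mul, hRR]
      rw [Finset.sum_congr rfl fun j _ => h3 j]
      rw [sq, Finset.sum_mul_sum, Finset.sum_mul]
      exact Finset.sum_congr rfl fun j _ => by rw [Finset.sum_mul]
    have hL : ∫ ω, (2 * y i) * (∑ j, a j * R i ω j) ∂μ = (2 * y i) * ∑ j, a j := by
      rw [MeasureTheory.integral_const_mul,
        integral_finset_sum _ fun j _ => (hR1 i j).const_mul (a j)]
      congr 1
      exact Finset.sum_congr rfl fun j _ => by
        rw [MeasureTheory.integral_const_mul, hmean, mul_one]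
    rw [hD, hL]
    simp
    ring
  -- matrix part
  have hBdet : IsUnit B.det := by
    have h : B.det * B.det = C.det := by rw [← Matrix.det_mul, hB]
    exact isUnit_of_mul_isUnit_left (h ▸ hCinv)
  have hBBinv : B * B⁻¹ = 1 := Matrix.mul_nonsing_inv B hBdet
  have hdot : ∀ i, B.mulVec w ⬝ᵥ B⁻¹.mulVec (x i) = ∑ j, w j * x i j := by
    intro i
    have h0 : B.mulVec w ⬝ᵥ B⁻¹.mulVec (x i)
        = (B⁻¹.mulVec (x i)) ⬝ᵥ B.mulVec w := dotProduct_comm _ _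
    rw [h0, Matrix.dotProduct_mulVec, ← Matrix.mulVec_transpose, hBsymm,
      Matrix.mulVec_mulVec, hBBinv, Matrix.one_mulVec]
    simp [dotProduct, mul_comm]
  have hquad : B.mulVec w ⬝ᵥ B.mulVec w
      = (1 / (N : ℝ)) * ∑ i, (∑ j, w j * x i j) ^ 2 := by
    rw [Matrix.dotProduct_mulVec, ← Matrix.mulVec_transpose, hBsymm,
      Matrix.mulVec_mulVec, hB]
    calc C.mulVec w ⬝ᵥ w
        = ∑ j, ∑ k, ∑ i, (1 / (N : ℝ)) * (x i j * x i k) * w k * w j := by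
          simp only [dotProduct, Matrix.mulVec, hC, Finset.sum_mul, Finset.mul_sum]
      _ = ∑ i, ∑ j, ∑ k, (1 / (N : ℝ)) * (x i j * x i k) * w k * w j := by
          rw [show (∑ j, ∑ k, ∑ i, (1 / (N : ℝ)) * (x i j * x i k) * w k * w j)
              = ∑ j, ∑ i, ∑ k, (1 / (N : ℝ)) * (x i j * x i k) * w k * w j from
            Finset.sum_congr rfl fun j _ => Finset.sum_comm]
          exact Finset.sum_comm
      _ = (1 / (N : ℝ)) * ∑ i, (∑ j, w j * x i j) ^ 2 := by
          rw [Finset.mul_sum]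
          refine Finset.sum_congr rfl fun i _ => ?_
          rw [sq, Finset.sum_mul_sum, Finset.mul_sum]
          refine Finset.sum_congr rfl fun j _ => ?_
          rw [Finset.mul_sum]
          exact Finset.sum_congr rfl fun k _ => by ring
  -- assemble
  have hsum : ∑ i, ∫ ω, (∑ j, w j * (R i ω j * x i j) - y i) ^ 2 ∂μ
      = ∑ i, ((∑ j, w j * x i j - y i) ^ 2 + l * (∑ j, w j * x i j) ^ 2) :=
    Finset.sum_congr rfl fun i _ => key i
  have hsum2 : ∑ i, (B.mulVec w ⬝ᵥ B⁻¹.mulVec (x i) - y i) ^ 2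
      = ∑ i, (∑ j, w j * x i j - y i) ^ 2 :=
    Finset.sum_congr rfl fun i _ => by rw [hdot]
  rw [hsum, hsum2, hquad, Finset.sum_add_distrib,
    show (∑ i, l * (∑ j, w j * x i j) ^ 2) = l * ∑ i, (∑ j, w j * x i j) ^ 2 from
      (Finset.mul_sum _ _ _).symm]
  ring
end

section
/- Let ℓ: ℝ → ℝ be a polynomial of degree at most 2 (so that its second-order Taylor expansion is exact). Let R be a random vector in ℝ^d with mean 𝟙_d and covariance λΣ. Then for any w, x ∈ ℝ^d: E[ℓ(wᵀ(R ⊙ x))] = ℓ(wᵀx) + (λ/2) ℓ''(wᵀx) · wᵀ((xxᵀ) ⊙ Σ)w. -/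
open MeasureTheory Finset ProbabilityTheory

/-!
For a quadratic `ℓ(t) = a t² + b t + c` and any square-integrable `Y`, the Taylor expansion of
`ℓ` around `E[Y]` is exact, so `E[ℓ(Y)] = ℓ(E[Y]) + a · Var[Y]`. Taking `Y = ∑ⱼ wⱼ xⱼ Rⱼ`, the mean
is `wᵀx` because `E[R] = 𝟙`, and by bilinearity of the covariance
`Var[Y] = ∑ᵢⱼ wᵢxᵢ wⱼxⱼ cov[Rᵢ, Rⱼ] = λ · wᵀ((xxᵀ) ⊙ Σ)w`.
-/

section Moments

variable {Ω : Type*} [MeasurableSpace Ω] {μ : Measure Ω}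

lemma integral_quadratic_eq_add_variance [IsProbabilityMeasure μ] {Y : Ω → ℝ} (hY : MemLp Y 2 μ)
    (a b c : ℝ) :
    ∫ ω, (a * Y ω ^ 2 + b * Y ω + c) ∂μ = a * μ[Y] ^ 2 + b * μ[Y] + c + a * Var[Y; μ] := by
  have hY1 : Integrable Y μ := hY.integrable one_le_two
  have hY2 : Integrable (fun ω ↦ Y ω ^ 2) μ := hY.integrable_sq
  rw [integral_add (f := fun ω ↦ a * Y ω ^ 2 + b * Y ω)
      ((hY2.const_mul a).add (hY1.const_mul b)) (integrable_const c),
    integral_add (hY2.const_mul a) (hY1.const_mul b), integral_const_mul, integral_const_mul,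
    integral_const, variance_eq_sub hY]
  simp only [probReal_univ, smul_eq_mul, one_mul, Pi.pow_apply]
  ring

section WeightedSum

variable {ι : Type*} [Fintype ι] {X : ι → Ω → ℝ}

lemma integral_weightedSum (hX : ∀ i, Integrable (X i) μ) (u : ι → ℝ) :
    ∫ ω, ∑ i, u i * X i ω ∂μ = ∑ i, u i * μ[X i] := by
  rw [integral_finsetSum _ fun i _ ↦ (hX i).const_mul (u i)]
  simp only [integral_const_mul]

lemma variance_weightedSum [IsFiniteMeasure μ] (hX : ∀ i, MemLp (X i) 2 μ) (u : ι → ℝ) :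
    Var[fun ω ↦ ∑ i, u i * X i ω; μ] = ∑ i, ∑ j, u i * u j * cov[X i, X j; μ] := by
  rw [variance_fun_sum fun i ↦ (hX i).const_mul (u i)]
  simp only [covariance_const_mul_left, covariance_const_mul_right, mul_left_comm, mul_assoc]

end WeightedSum

end Moments

theorem stmt14_general {Ω : Type*} [MeasurableSpace Ω] (μ : Measure Ω) [IsProbabilityMeasure μ]
    (d : ℕ) (R : Ω → Fin d → ℝ) (l : ℝ) (S : Matrix (Fin d) (Fin d) ℝ)
    (hmean : ∀ j, ∫ ω, R ω j ∂μ = 1)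
    (hcov : ∀ j k, ∫ ω, (R ω j - 1) * (R ω k - 1) ∂μ = l * S j k)
    (hint : ∀ j k, Integrable (fun ω => R ω j * R ω k) μ)
    (a b c : ℝ) (ℓ : ℝ → ℝ) (hℓ : ∀ t, ℓ t = a * t ^ 2 + b * t + c)
    (w x : Fin d → ℝ) :
    ∫ ω, ℓ (∑ j, w j * (R ω j * x j)) ∂μ
      = ℓ (∑ j, w j * x j)
        + (l / 2) * (2 * a) * ∑ i, ∑ j, w i * (x i * x j * S i j) * w j := by
  have hR1 (j : Fin d) : Integrable (fun ω ↦ R ω j) μ :=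
    .of_integral_ne_zero (by simp [hmean j])
  have hR2 (j : Fin d) : MemLp (fun ω ↦ R ω j) 2 μ :=
    (memLp_two_iff_integrable_sq (hR1 j).aestronglyMeasurable).2 (by simpa only [sq] using hint j j)
  have hRcov (i j : Fin d) : cov[fun ω ↦ R ω i, fun ω ↦ R ω j; μ] = l * S i j := by
    simp only [covariance, hmean, hcov]
  set Y : Ω → ℝ := fun ω ↦ ∑ j, w j * x j * R ω j
  have hY : MemLp Y 2 μ := memLp_finsetSum _ fun j _ ↦ (hR2 j).const_mul _
  have hYmean : μ[Y] = ∑ j, w j * x j := by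
    simp only [Y, integral_weightedSum hR1, hmean, mul_one]
  have hYvar : Var[Y; μ] = l * ∑ i, ∑ j, w i * (x i * x j * S i j) * w j := by
    simp only [Y, variance_weightedSum hR2, hRcov, mul_sum]
    exact sum_congr rfl fun i _ ↦ sum_congr rfl fun j _ ↦ by ring
  have hℓY : ∀ ω, ℓ (∑ j, w j * (R ω j * x j)) = a * Y ω ^ 2 + b * Y ω + c := fun ω ↦ by
    simp only [hℓ, Y, mul_comm (R ω _), mul_assoc]
  simp only [hℓY, integral_quadratic_eq_add_variance hY, hYmean, hYvar, hℓ]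
  ring

/-- For a quadratic loss `ℓ(t) = a t² + b t + c` (degree ≤ 2, so that its
second-order Taylor expansion is exact, with constant second derivative `2a`) and noise
`R` with mean `𝟙` and covariance `λΣ`:
`E[ℓ(wᵀ(R ⊙ x))] = ℓ(wᵀx) + (λ/2) ℓ''(wᵀx) wᵀ((xxᵀ) ⊙ Σ)w`. -/
theorem stmt14 {Ω : Type*} [MeasurableSpace Ω] (μ : Measure Ω) [IsProbabilityMeasure μ]
    (d : ℕ) (R : Ω → Fin d → ℝ) (l : ℝ) (S : Matrix (Fin d) (Fin d) ℝ)
    (hl : 0 ≤ l) (hS : S.PosSemidef)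
    (hmean : ∀ j, ∫ ω, R ω j ∂μ = 1)
    (hcov : ∀ j k, ∫ ω, (R ω j - 1) * (R ω k - 1) ∂μ = l * S j k)
    (hint : ∀ j k, Integrable (fun ω => R ω j * R ω k) μ)
    (a b c : ℝ) (ℓ : ℝ → ℝ) (hℓ : ∀ t, ℓ t = a * t ^ 2 + b * t + c)
    (w x : Fin d → ℝ) :
    ∫ ω, ℓ (∑ j, w j * (R ω j * x j)) ∂μ
      = ℓ (∑ j, w j * x j)
        + (l / 2) * (2 * a) * ∑ i, ∑ j, w i * (x i * x j * S i j) * w j :=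
  stmt14_general μ d R l S hmean hcov hint a b c ℓ hℓ w x
end
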